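/- arXiv:1403.2340 — 2 statements merged into one kernel-verified Lean document; each statement's English description precedes it below -/
import Mathlib

section
/- Let X be a convex subset of ℝ^d, let g : X → ℝ be a Lipschitz function, let η ≥ 0, and let x, y, z, x', y', z' be six points of X such that ‖x − x'‖ ≤ η, ‖y − y'‖ ≤ η, ‖z − z'‖ ≤ η, with x ≠ y, x' ≠ y', z on the segment [x,y] and z' on the segment [x',y']. Then |ℓ_{xyz}(g) − ℓ_{x'y'z'}(g)| ≤ 6 η Lip(g). -/
open NNReal

/-- The value of the affine form `ℓ_{xyz}` on a function `g` : with `λ = ‖z−y‖/‖x−y‖`,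
`ℓ_{xyz}(g) = g(z) − λ g(x) − (1−λ) g(y)`. -/
noncomputable def ellVal {d : ℕ} (g : EuclideanSpace ℝ (Fin d) → ℝ)
    (x y z : EuclideanSpace ℝ (Fin d)) : ℝ :=
  g z - (‖z - y‖ / ‖x - y‖) * g x - (1 - ‖z - y‖ / ‖x - y‖) * g y

/-!
Write `λ = ‖z − y‖/‖x − y‖` and `λ'` for the primed triple. Then
`ℓ_{xyz}(g) − ℓ_{x'y'z'}(g) = (g z − g z') − λ (g x − g x') − (1 − λ)(g y − g y') − (λ − λ')(g x' − g y')`.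
Since `0 ≤ λ ≤ 1`, the first three terms contribute at most `2 η L`. For the last one,
`|λ − λ'| ‖x' − y'‖ = |λ ‖x' − y'‖ − ‖z' − y'‖|`, and replacing `‖x' − y'‖` by `‖x − y‖` (cost `2η`,
weighted by `λ ≤ 1`) and then `‖z − y‖ = λ ‖x − y‖` by `‖z' − y'‖` (cost `2η`) shows that it is at most
`4 η`, so the last term contributes at most `4 η L`.
-/

lemma abs_norm_sub_sub_norm_sub_le {E : Type*} [SeminormedAddCommGroup E] (a b a' b' : E) :
    |‖a - b‖ - ‖a' - b'‖| ≤ ‖a - a'‖ + ‖b - b'‖ :=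
  calc |‖a - b‖ - ‖a' - b'‖| ≤ ‖(a - b) - (a' - b')‖ := abs_norm_sub_norm_le _ _
    _ = ‖(a - a') - (b - b')‖ := by rw [sub_sub_sub_comm]
    _ ≤ ‖a - a'‖ + ‖b - b'‖ := norm_sub_le _ _

section SegmentRatio

variable {E : Type*} [NormedAddCommGroup E]

noncomputable def segmentRatio (x y z : E) : ℝ := ‖z - y‖ / ‖x - y‖

lemma segmentRatio_nonneg (x y z : E) : 0 ≤ segmentRatio x y z :=
  div_nonneg (norm_nonneg _) (norm_nonneg _)

variable [NormedSpace ℝ E]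

lemma exists_norm_sub_eq_mul_of_mem_segment {x y z : E} (hz : z ∈ segment ℝ x y) :
    ∃ t ∈ Set.Icc (0 : ℝ) 1, ‖z - y‖ = t * ‖x - y‖ := by
  rw [segment_symm, segment_eq_image'] at hz
  obtain ⟨t, ht, rfl⟩ := hz
  refine ⟨t, ht, ?_⟩
  rw [add_sub_cancel_left, norm_smul, Real.norm_of_nonneg ht.1]

lemma segmentRatio_le_one {x y z : E} (hz : z ∈ segment ℝ x y) : segmentRatio x y z ≤ 1 := by
  obtain ⟨t, ht, hzt⟩ := exists_norm_sub_eq_mul_of_mem_segment hz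
  refine div_le_one_of_le₀ ?_ (norm_nonneg _)
  rw [hzt]
  exact mul_le_of_le_one_left (norm_nonneg _) ht.2

/-- For `x = y` the segment is `{y}`, so both sides vanish even though the ratio divides by `0`. -/
lemma segmentRatio_mul_norm_sub {x y z : E} (hz : z ∈ segment ℝ x y) :
    segmentRatio x y z * ‖x - y‖ = ‖z - y‖ := by
  obtain ⟨t, -, hzt⟩ := exists_norm_sub_eq_mul_of_mem_segment hz
  rcases eq_or_ne ‖x - y‖ 0 with hxy | hxy
  · rw [hzt, hxy, mul_zero, mul_zero]
  · exact div_mul_cancel₀ _ hxy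

lemma abs_segmentRatio_sub_mul_norm_sub_le {x y z x' y' z' : E} {η : ℝ}
    (hz : z ∈ segment ℝ x y) (hz' : z' ∈ segment ℝ x' y')
    (hx : ‖x - x'‖ ≤ η) (hy : ‖y - y'‖ ≤ η) (hz_near : ‖z - z'‖ ≤ η) :
    |segmentRatio x y z - segmentRatio x' y' z'| * ‖x' - y'‖ ≤ 4 * η := by
  set t := segmentRatio x y z
  have ht0 : 0 ≤ t := segmentRatio_nonneg x y z
  have hdist : |‖x' - y'‖ - ‖x - y‖| ≤ 2 * η := by
    have := abs_norm_sub_sub_norm_sub_le x' y' x y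
    rw [norm_sub_rev x' x, norm_sub_rev y' y] at this
    linarith
  have hscaled : |t * ‖x' - y'‖ - t * ‖x - y‖| ≤ 2 * η := by
    rw [← mul_sub, abs_mul, abs_of_nonneg ht0]
    exact (mul_le_of_le_one_left (abs_nonneg _) (segmentRatio_le_one hz)).trans hdist
  have hend : |‖z - y‖ - ‖z' - y'‖| ≤ 2 * η := by
    linarith [abs_norm_sub_sub_norm_sub_le z y z' y']
  rw [← segmentRatio_mul_norm_sub hz] at hend
  calc |t - segmentRatio x' y' z'| * ‖x' - y'‖
      = |t * ‖x' - y'‖ - ‖z' - y'‖| := by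
        rw [← segmentRatio_mul_norm_sub hz', ← sub_mul, abs_mul, abs_of_nonneg (norm_nonneg _)]
    _ ≤ |t * ‖x' - y'‖ - t * ‖x - y‖| + |t * ‖x - y‖ - ‖z' - y'‖| := abs_sub_le _ _ _
    _ ≤ 2 * η + 2 * η := add_le_add hscaled hend
    _ = 4 * η := by ring

end SegmentRatio

lemma ellVal_sub_ellVal {d : ℕ} (g : EuclideanSpace ℝ (Fin d) → ℝ)
    (x y z x' y' z' : EuclideanSpace ℝ (Fin d)) :
    ellVal g x y z - ellVal g x' y' z' =
      (g z - g z') - segmentRatio x y z * (g x - g x') - (1 - segmentRatio x y z) * (g y - g y')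
        - (segmentRatio x y z - segmentRatio x' y' z') * (g x' - g y') := by
  simp only [ellVal, segmentRatio]
  ring

lemma abs_sub_sub_sub_le (a b c e : ℝ) : |a - b - c - e| ≤ |a| + |b| + |c| + |e| :=
  (abs_sub _ _).trans (add_le_add_left ((abs_sub _ _).trans
    (add_le_add_left (abs_sub _ _) _)) _)

theorem stmt7_general {d : ℕ} (X : Set (EuclideanSpace ℝ (Fin d)))
    (g : EuclideanSpace ℝ (Fin d) → ℝ) (L : ℝ≥0) (hg : LipschitzOnWith L g X)
    (η : ℝ) (x y z x' y' z' : EuclideanSpace ℝ (Fin d))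
    (hx : x ∈ X) (hy : y ∈ X) (hzX : z ∈ X) (hx' : x' ∈ X) (hy' : y' ∈ X) (hz'X : z' ∈ X)
    (hzseg : z ∈ segment ℝ x y) (hz'seg : z' ∈ segment ℝ x' y')
    (h1 : ‖x - x'‖ ≤ η) (h2 : ‖y - y'‖ ≤ η) (h3 : ‖z - z'‖ ≤ η) :
    |ellVal g x y z - ellVal g x' y' z'| ≤ 6 * η * L := by
  have lip : ∀ p ∈ X, ∀ q ∈ X, |g p - g q| ≤ L * ‖p - q‖ := fun p hp q hq => by
    simpa [Real.dist_eq, dist_eq_norm] using hg.dist_le_mul p hp q hq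
  rw [ellVal_sub_ellVal]
  set t := segmentRatio x y z
  have ht0 : 0 ≤ t := segmentRatio_nonneg x y z
  have ht1 : 0 ≤ 1 - t := sub_nonneg.2 (segmentRatio_le_one hzseg)
  have hratio := abs_segmentRatio_sub_mul_norm_sub_le hzseg hz'seg h1 h2 h3
  calc _ ≤ |g z - g z'| + t * |g x - g x'| + (1 - t) * |g y - g y'|
          + |t - segmentRatio x' y' z'| * |g x' - g y'| := by
        have := abs_sub_sub_sub_le (g z - g z') (t * (g x - g x')) ((1 - t) * (g y - g y'))
          ((t - segmentRatio x' y' z') * (g x' - g y'))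
        rwa [abs_mul, abs_mul, abs_mul, abs_of_nonneg ht0, abs_of_nonneg ht1] at this
    _ ≤ L * η + t * (L * η) + (1 - t) * (L * η)
          + |t - segmentRatio x' y' z'| * (L * ‖x' - y'‖) := by
        gcongr
        exacts [(lip z hzX z' hz'X).trans (by gcongr), (lip x hx x' hx').trans (by gcongr),
          (lip y hy y' hy').trans (by gcongr), lip x' hx' y' hy']
    _ = 2 * η * L + (|t - segmentRatio x' y' z'| * ‖x' - y'‖) * L := by ring
    _ ≤ 2 * η * L + 4 * η * L := by gcongr
    _ = 6 * η * L := by ring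

/-- Let `X ⊆ ℝ^d` be convex, `g : X → ℝ` Lipschitz, `η ≥ 0`, and let
`x, y, z, x', y', z' ∈ X` with `‖x−x'‖ ≤ η`, `‖y−y'‖ ≤ η`, `‖z−z'‖ ≤ η`, `x ≠ y`,
`x' ≠ y'`, `z ∈ [x,y]`, `z' ∈ [x',y']`.  Then `|ℓ_{xyz}(g) − ℓ_{x'y'z'}(g)| ≤ 6η·Lip(g)`. -/
theorem stmt7 {d : ℕ} (X : Set (EuclideanSpace ℝ (Fin d))) (hX : Convex ℝ X)
    (g : EuclideanSpace ℝ (Fin d) → ℝ) (L : ℝ≥0) (hg : LipschitzOnWith L g X)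
    (η : ℝ) (hη : 0 ≤ η) (x y z x' y' z' : EuclideanSpace ℝ (Fin d))
    (hx : x ∈ X) (hy : y ∈ X) (hzX : z ∈ X) (hx' : x' ∈ X) (hy' : y' ∈ X) (hz'X : z' ∈ X)
    (hxy : x ≠ y) (hxy' : x' ≠ y')
    (hzseg : z ∈ segment ℝ x y) (hz'seg : z' ∈ segment ℝ x' y')
    (h1 : ‖x - x'‖ ≤ η) (h2 : ‖y - y'‖ ≤ η) (h3 : ‖z - z'‖ ≤ η) :
    |ellVal g x y z - ellVal g x' y' z'| ≤ 6 * η * L :=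
  stmt7_general X g L hg η x y z x' y' z' hx hy hzX hx' hy' hz'X hzseg hz'seg h1 h2 h3
end

section
/- Let X and Y be bounded open subsets of ℝ^n and let c : X̄ × Ȳ → ℝ be C¹ in its first variable and differentiable in its second variable. For y ∈ Y, let X_y = {−∇_y c(x,y) : x ∈ X} and suppose there is a map E_y : X_y → X with E_y(−∇_y c(x,y)) = x for every x ∈ X (the c-exponential map, condition (A1)). Assume the non-negative cross-curvature condition (A3): for every pair y₀, y ∈ Y, the map v ∈ X_{y₀} ↦ c(E_{y₀}(v), y₀) − c(E_{y₀}(v), y) is convex on X_{y₀} (in particular each X_{y₀} is convex). Let ψ : Y → ℝ be such that φ(x) = sup_{y∈Y} (−ψ(y) − c(x,y)) is finite for all x ∈ X. Then for every y ∈ Y, the function φ_y : v ∈ X_y ↦ φ(E_y(v)) + c(E_y(v), y) is convex on X_y. -/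
open Set

noncomputable section

abbrev Esp (n : ℕ) := EuclideanSpace ℝ (Fin n)

section

variable {𝕜 E β ι : Type*} [Semiring 𝕜] [PartialOrder 𝕜] [AddCommMonoid E] [SMul 𝕜 E]
  [AddCommMonoid β] [PartialOrder β] [IsOrderedAddMonoid β] [SMul 𝕜 β] [PosSMulMono 𝕜 β]

theorem convexOn_of_isLUB_image {s : Set E} {I : Set ι} {f : ι → E → β} {g : E → β}
    (hs : Convex 𝕜 s) (hf : ∀ i ∈ I, ConvexOn 𝕜 s (f i))
    (hg : ∀ x ∈ s, IsLUB ((f · x) '' I) (g x)) : ConvexOn 𝕜 s g := by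
  refine ⟨hs, fun x hx y hy a b ha hb hab => (hg _ (hs hx hy ha hb hab)).2 ?_⟩
  rintro _ ⟨i, hi, rfl⟩
  calc f i (a • x + b • y) ≤ a • f i x + b • f i y := (hf i hi).2 hx hy ha hb hab
    _ ≤ a • g x + b • g y := by
      gcongr
      · exact (hg x hx).1 ⟨i, hi, rfl⟩
      · exact (hg y hy).1 ⟨i, hi, rfl⟩

end

theorem IsLUB.image_add_const {ι α : Type*} [AddGroup α] [PartialOrder α] [AddRightMono α]
    {I : Set ι} {f : ι → α} {a : α} (h : IsLUB (f '' I) a) (b : α) :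
    IsLUB ((f · + b) '' I) (a + b) := by
  rw [← image_image (· + b)]
  exact (OrderIso.addRight b).isLUB_image'.2 h

theorem stmt16_general (n : ℕ) (X Y : Set (Esp n))
    (c : Esp n → Esp n → ℝ)
    (cy : Esp n → Esp n → Esp n)
    (E : Esp n → Esp n → Esp n)
    (hErange : ∀ y ∈ Y, ∀ v ∈ (fun x => -(cy x y)) '' X, E y v ∈ X)
    (hA3 : ∀ y₀ ∈ Y, ∀ y ∈ Y,
      ConvexOn ℝ ((fun x => -(cy x y₀)) '' X)
        (fun v => c (E y₀ v) y₀ - c (E y₀ v) y))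
    (ψ : Esp n → ℝ) (φ : Esp n → ℝ)
    (hφ : ∀ x ∈ X, IsLUB {t : ℝ | ∃ y ∈ Y, t = -ψ y - c x y} (φ x)) :
    ∀ y ∈ Y, ConvexOn ℝ ((fun x => -(cy x y)) '' X)
      (fun v => φ (E y v) + c (E y v) y) := by
  intro y hy
  -- `φ (E_y v) + c (E_y v) y` is the supremum over `y'` of `-ψ y'` plus the (A3) functions.
  refine convexOn_of_isLUB_image (hA3 y hy y hy).1
    (f := fun y' => (fun v => c (E y v) y - c (E y v) y') + fun _ => -ψ y')
    (fun y' hy' => (hA3 y hy y' hy').add_const _) fun v hv => ?_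
  have hφv : IsLUB ((fun y' => -ψ y' - c (E y v) y') '' Y) (φ (E y v)) := by
    convert hφ (E y v) (hErange y hy v hv) using 1
    ext t
    simp only [mem_image, mem_ofPred_eq, eq_comm]
  convert hφv.image_add_const (c (E y v) y) using 3 with y'
  simp only [Pi.add_apply]
  ring

/-- Let `X, Y ⊆ ℝ^n` be bounded open sets and `c : X̄ × Ȳ → ℝ` be `C¹` in
its first variable and differentiable in its second variable, with `∇_y c = cy`.  For
`y ∈ Y` let `X_y = {−∇_y c(x,y) : x ∈ X}` and suppose there is a `c`-exponential map
`E_y : X_y → X` with `E_y(−∇_y c(x,y)) = x` for all `x ∈ X` (condition (A1)).  Assume the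
non-negative cross-curvature condition (A3): for every `y₀, y ∈ Y`, the map
`v ∈ X_{y₀} ↦ c(E_{y₀}(v), y₀) − c(E_{y₀}(v), y)` is convex on `X_{y₀}` (in particular
`X_{y₀}` is convex).  Let `ψ : Y → ℝ` be such that `φ(x) = sup_{y ∈ Y}(−ψ(y) − c(x,y))` is
finite for all `x ∈ X`.  Then for every `y ∈ Y` the function
`φ_y : v ∈ X_y ↦ φ(E_y(v)) + c(E_y(v), y)` is convex on `X_y`. -/
theorem stmt16 (n : ℕ) (X Y : Set (Esp n)) (hXo : IsOpen X) (hXb : Bornology.IsBounded X)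
    (hYo : IsOpen Y) (hYb : Bornology.IsBounded Y)
    (c : Esp n → Esp n → ℝ)
    (hc1 : ∀ y ∈ closure Y, ContDiffOn ℝ 1 (fun x => c x y) (closure X))
    (cy : Esp n → Esp n → Esp n)
    (hcy : ∀ x ∈ X, ∀ y ∈ Y, HasGradientAt (fun y' => c x y') (cy x y) y)
    (E : Esp n → Esp n → Esp n)
    (hE : ∀ y ∈ Y, ∀ x ∈ X, E y (-(cy x y)) = x)
    (hErange : ∀ y ∈ Y, ∀ v ∈ (fun x => -(cy x y)) '' X, E y v ∈ X)
    (hA3 : ∀ y₀ ∈ Y, ∀ y ∈ Y,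
      ConvexOn ℝ ((fun x => -(cy x y₀)) '' X)
        (fun v => c (E y₀ v) y₀ - c (E y₀ v) y))
    (ψ : Esp n → ℝ) (φ : Esp n → ℝ)
    (hφ : ∀ x ∈ X, IsLUB {t : ℝ | ∃ y ∈ Y, t = -ψ y - c x y} (φ x)) :
    ∀ y ∈ Y, ConvexOn ℝ ((fun x => -(cy x y)) '' X)
      (fun v => φ (E y v) + c (E y v) y) :=
  stmt16_general n X Y c cy E hErange hA3 ψ φ hφ

end
end
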